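/- If ∫_{[0,1]} p^{−1} Λ(dp) = ∞ (no dust component), then κ(x)/λ(x) → 0 as x → ∞, i.e. κ(x) = o(λ(x)). -/

import Mathlib

open MeasureTheory Real Set Filter Topology

/-- The integrand of `lam`, with its continuous extension `x(x-1)/2` at `p = 0`. -/
noncomputable def lamInt (x p : ℝ) : ℝ :=
  if p = 0 then x * (x - 1) / 2
  else (1 - (1 - p) ^ x - x * p * (1 - p) ^ (x - 1)) / p ^ 2

/-- The total jump rate function `λ(x)` of the `Λ`-coalescent. -/
noncomputable def lam (Λ : Measure ℝ) (x : ℝ) : ℝ :=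
  ∫ p in Set.Icc (0:ℝ) 1, lamInt x p ∂Λ

/-- The integrand of `mu`, with its continuous extension `x(x-1)/2` at `p = 0`. -/
noncomputable def muInt (x p : ℝ) : ℝ :=
  if p = 0 then x * (x - 1) / 2
  else (x * p - 1 + (1 - p) ^ x) / p ^ 2

/-- The rate of decrease `μ(x)` of the `Λ`-coalescent. -/
noncomputable def mu (Λ : Measure ℝ) (x : ℝ) : ℝ :=
  ∫ p in Set.Icc (0:ℝ) 1, muInt x p ∂Λ

/-- The rate of decrease per capita `κ(x) = μ(x)/x`. -/
noncomputable def kappa (Λ : Measure ℝ) (x : ℝ) : ℝ := mu Λ x / x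

/-! Both rates are measured against `regInv x p = x / (1 + x p)`, which is comparable to
`min x p⁻¹`. The bound `(1 - p) ^ x ≤ (1 + x p)⁻¹` (Bernoulli applied to `1 + p`) gives
`κ(x) ≤ ∫ regInv x dΛ` and, applied with exponent `(x - 1) / 2` and squared,
`∫ (regInv x)² dΛ ≤ 9 λ(x)`. By monotone convergence the no-dust condition makes
`∫ regInv x dΛ`, hence `∫ (regInv x)² dΛ`, tend to infinity. Finally, for any finite measure,
`g ≤ (M² + g²) / (2M)` with `M² = ∫ g²` gives `∫ g / ∫ g² ≤ (ν(α) + 1) / (2 √(∫ g²)) → 0`. -/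

section SecondMoment

variable {α ι : Type*} [MeasurableSpace α] {ν : Measure α} [IsFiniteMeasure ν]

theorem integral_le_sq_mul_measureReal_add_integral_sq_div {g : α → ℝ} (hg : 0 ≤ᵐ[ν] g)
    (hg2 : Integrable (fun a => g a ^ 2) ν) {M : ℝ} (hM : 0 < M) :
    ∫ a, g a ∂ν ≤ (M ^ 2 * ν.real univ + ∫ a, g a ^ 2 ∂ν) / (2 * M) := by
  have hpt : ∀ a, g a ≤ (M ^ 2 + g a ^ 2) / (2 * M) := fun a => by
    rw [le_div_iff₀ (by positivity)]; nlinarith [sq_nonneg (g a - M)]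
  calc ∫ a, g a ∂ν ≤ ∫ a, (M ^ 2 + g a ^ 2) / (2 * M) ∂ν :=
        integral_mono_of_nonneg hg (((integrable_const _).add hg2).div_const _)
          (ae_of_all _ hpt)
    _ = _ := by
        rw [integral_div, integral_add (integrable_const _) hg2, integral_const, smul_eq_mul,
          mul_comm]

theorem tendsto_integral_div_integral_sq_nhds_zero {l : Filter ι} {g : ι → α → ℝ}
    (hg : ∀ᶠ i in l, 0 ≤ᵐ[ν] g i) (hg2 : ∀ᶠ i in l, Integrable (fun a => g i a ^ 2) ν)
    (h : Tendsto (fun i => ∫ a, g i a ^ 2 ∂ν) l atTop) :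
    Tendsto (fun i => (∫ a, g i a ∂ν) / ∫ a, g i a ^ 2 ∂ν) l (𝓝 0) := by
  set C := ν.real univ
  have hbound : Tendsto (fun i => (C + 1) / (2 * √(∫ a, g i a ^ 2 ∂ν))) l (𝓝 0) :=
    tendsto_const_nhds.div_atTop ((tendsto_sqrt_atTop.comp h).const_mul_atTop two_pos)
  refine squeeze_zero' ?_ ?_ hbound
  · filter_upwards [h.eventually_gt_atTop 0, hg] with i hS hgi
    exact div_nonneg (integral_nonneg_of_ae hgi) hS.le
  · filter_upwards [h.eventually_gt_atTop 0, hg, hg2] with i hS hgi hgi2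
    set S := ∫ a, g i a ^ 2 ∂ν
    have hs : 0 < √S := Real.sqrt_pos.2 hS
    have hsq : √S ^ 2 = S := Real.sq_sqrt hS.le
    have key := integral_le_sq_mul_measureReal_add_integral_sq_div hgi hgi2 hs
    rw [div_le_iff₀ hS]
    calc ∫ a, g i a ∂ν ≤ (√S ^ 2 * C + S) / (2 * √S) := key
      _ = (C + 1) / (2 * √S) * S := by
          rw [hsq]; field_simp

end SecondMoment

theorem one_sub_mul_le_one_sub_rpow {p x : ℝ} (hp : p ≤ 1) (hx : 1 ≤ x) :
    1 - x * p ≤ (1 - p) ^ x := by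
  simpa [sub_eq_add_neg] using one_add_mul_self_le_rpow_one_add (s := -p) (by linarith) hx

theorem one_sub_rpow_le_inv_one_add_mul {p x : ℝ} (hp : 0 ≤ p) (hp1 : p ≤ 1) (hx : 1 ≤ x) :
    (1 - p) ^ x ≤ (1 + x * p)⁻¹ := by
  have h1p : 1 - p ≤ (1 + p)⁻¹ := by
    rw [← one_div, le_div_iff₀ (by linarith)]; nlinarith
  calc (1 - p) ^ x ≤ (1 + p)⁻¹ ^ x := Real.rpow_le_rpow (by linarith) h1p (by linarith)
    _ = ((1 + p) ^ x)⁻¹ := Real.inv_rpow (by linarith) x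
    _ ≤ (1 + x * p)⁻¹ :=
        inv_anti₀ (by nlinarith) (one_add_mul_self_le_rpow_one_add (by linarith) hx)

noncomputable def regInv (x p : ℝ) : ℝ := x / (1 + x * p)

section regInv

variable {x y p : ℝ}

theorem regInv_nonneg (hx : 0 ≤ x) (hp : 0 ≤ p) : 0 ≤ regInv x p := by
  unfold regInv; positivity

theorem regInv_le_regInv (hx : 0 ≤ x) (hxy : x ≤ y) (hp : 0 ≤ p) :
    regInv x p ≤ regInv y p := by
  unfold regInv
  rw [div_le_div_iff₀ (by positivity) (by nlinarith)]
  nlinarith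

theorem half_le_regInv (hx : 1 ≤ x) (hp : 0 ≤ p) (hp1 : p ≤ 1) : 1 / 2 ≤ regInv x p := by
  unfold regInv
  rw [div_le_div_iff₀ two_pos (by nlinarith)]
  nlinarith

theorem regInv_le_three_mul_regInv (hx : 3 ≤ x) (hp : 0 ≤ p) :
    regInv x p ≤ 3 * regInv ((x - 1) / 2) p := by
  unfold regInv
  rw [mul_div_assoc', div_le_div_iff₀ (by nlinarith) (by nlinarith)]
  nlinarith [mul_nonneg (mul_nonneg hp (by linarith : 0 ≤ x - 1)) (by linarith : 0 ≤ x)]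

theorem ofReal_regInv (hx : 0 < x) (hp : 0 ≤ p) :
    ENNReal.ofReal (regInv x p) = (ENNReal.ofReal x⁻¹ + ENNReal.ofReal p)⁻¹ := by
  rw [← ENNReal.ofReal_add (by positivity) hp, ← ENNReal.ofReal_inv_of_pos (by positivity)]
  congr 1
  unfold regInv
  field_simp

theorem continuousOn_regInv (hx : 0 ≤ x) : ContinuousOn (regInv x) (Ici 0) := by
  unfold regInv
  exact continuousOn_const.div (by fun_prop) fun p hp => by have : (0:ℝ) ≤ p := hp; positivity

end regInv

section Integrands

variable {x p : ℝ}

theorem muInt_nonneg (hx : 1 ≤ x) (hp : 0 ≤ p) (hp1 : p ≤ 1) : 0 ≤ muInt x p := by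
  rcases hp.eq_or_lt with rfl | hp0
  · rw [muInt, if_pos rfl]; nlinarith
  · rw [muInt, if_neg hp0.ne']
    have := one_sub_mul_le_one_sub_rpow hp1 hx
    exact div_nonneg (by linarith) (by positivity)

theorem muInt_le_mul_regInv (hx : 1 ≤ x) (hp : 0 ≤ p) (hp1 : p ≤ 1) :
    muInt x p ≤ x * regInv x p := by
  rcases hp.eq_or_lt with rfl | hp0
  · rw [muInt, if_pos rfl, regInv, mul_zero, add_zero, div_one]; nlinarith
  · have hxp : 0 < 1 + x * p := by nlinarith
    have hb := one_sub_rpow_le_inv_one_add_mul hp hp1 hx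
    have key : x * p - 1 + (1 + x * p)⁻¹ = x * regInv x p * p ^ 2 := by
      unfold regInv; field_simp; ring
    rw [muInt, if_neg hp0.ne', div_le_iff₀ (by positivity)]
    linarith

theorem lamInt_eq_of_pos_of_lt_one (hp : 0 < p) (hp1 : p < 1) :
    lamInt x p = (1 - (1 - p) ^ (x - 1) * (1 + (x - 1) * p)) / p ^ 2 := by
  have h := Real.rpow_add_one (by linarith : (1:ℝ) - p ≠ 0) (x - 1)
  rw [sub_add_cancel] at h
  rw [lamInt, if_neg hp.ne', h]
  ring

theorem lamInt_one (hx : 1 < x) : lamInt x 1 = 1 := by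
  rw [lamInt, if_neg one_ne_zero, sub_self, Real.zero_rpow (by linarith),
    Real.zero_rpow (by linarith)]
  norm_num

theorem sq_regInv_le_lamInt (hx : 3 ≤ x) (hp : 0 ≤ p) (hp1 : p ≤ 1) :
    regInv ((x - 1) / 2) p ^ 2 ≤ lamInt x p := by
  set t := (x - 1) / 2 with ht
  have ht1 : 1 ≤ t := by linarith
  have htp : 0 < 1 + t * p := by nlinarith
  rcases hp.eq_or_lt with rfl | hp0
  · rw [lamInt, if_pos rfl, regInv, mul_zero, add_zero, div_one]; nlinarith
  rcases hp1.eq_or_lt with rfl | hp1'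
  · rw [lamInt_one (by linarith), regInv, div_pow, div_le_one (by positivity)]
    nlinarith
  have hpow : (1 - p) ^ (x - 1) ≤ ((1 + t * p)⁻¹) ^ 2 := by
    rw [show x - 1 = t * 2 by rw [ht]; ring, Real.rpow_mul (by linarith), Real.rpow_two]
    exact pow_le_pow_left₀ (by positivity) (one_sub_rpow_le_inv_one_add_mul hp hp1 ht1) 2
  have key : regInv t p ^ 2 * p ^ 2 = 1 - ((1 + t * p)⁻¹) ^ 2 * (1 + (x - 1) * p) := by
    rw [show x - 1 = 2 * t by rw [ht]; ring]; unfold regInv; field_simp; ring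
  rw [lamInt_eq_of_pos_of_lt_one hp0 hp1', le_div_iff₀ (by positivity), key]
  have := mul_le_mul_of_nonneg_right hpow (by nlinarith : 0 ≤ 1 + (x - 1) * p)
  linarith

theorem lamInt_nonneg (hx : 3 ≤ x) (hp : 0 ≤ p) (hp1 : p ≤ 1) : 0 ≤ lamInt x p :=
  (sq_nonneg _).trans (sq_regInv_le_lamInt hx hp hp1)

theorem lamInt_le (hx : 2 ≤ x) (hp : 0 ≤ p) (hp1 : p ≤ 1) : lamInt x p ≤ (x - 1) ^ 2 := by
  rcases hp.eq_or_lt with rfl | hp0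
  · rw [lamInt, if_pos rfl]; nlinarith
  rcases hp1.eq_or_lt with rfl | hp1'
  · rw [lamInt_one (by linarith)]; nlinarith
  rw [lamInt_eq_of_pos_of_lt_one hp0 hp1', div_le_iff₀ (by positivity)]
  have hb := one_sub_mul_le_one_sub_rpow hp1 (by linarith : 1 ≤ x - 1)
  nlinarith [mul_le_mul_of_nonneg_right hb (by nlinarith : 0 ≤ 1 + (x - 1) * p)]

theorem measurable_lamInt : Measurable (lamInt x) := by
  unfold lamInt
  exact Measurable.ite (measurableSet_singleton 0) measurable_const (by fun_prop)

end Integrands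

section Rates

variable {Λ : Measure ℝ} {x : ℝ}

theorem integrableOn_regInv [IsFiniteMeasure Λ] (hx : 0 ≤ x) :
    IntegrableOn (regInv x) (Icc 0 1) Λ :=
  ((continuousOn_regInv hx).mono Icc_subset_Ici_self).integrableOn_compact isCompact_Icc

theorem integrableOn_sq_regInv [IsFiniteMeasure Λ] (hx : 0 ≤ x) :
    IntegrableOn (fun p => regInv x p ^ 2) (Icc 0 1) Λ :=
  (((continuousOn_regInv hx).mono Icc_subset_Ici_self).pow 2).integrableOn_compact isCompact_Icc

theorem integrableOn_lamInt [IsFiniteMeasure Λ] (hx : 3 ≤ x) :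
    IntegrableOn (lamInt x) (Icc 0 1) Λ := by
  refine Integrable.mono' (integrable_const ((x - 1) ^ 2)) measurable_lamInt.aestronglyMeasurable
    (ae_restrict_of_forall_mem measurableSet_Icc fun p hp => ?_)
  rw [Real.norm_of_nonneg (lamInt_nonneg hx hp.1 hp.2)]
  exact lamInt_le (by linarith) hp.1 hp.2

theorem lam_nonneg (hx : 3 ≤ x) : 0 ≤ lam Λ x :=
  setIntegral_nonneg measurableSet_Icc fun _ hp => lamInt_nonneg hx hp.1 hp.2

theorem kappa_nonneg (hx : 1 ≤ x) : 0 ≤ kappa Λ x :=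
  div_nonneg (setIntegral_nonneg measurableSet_Icc fun p hp => muInt_nonneg hx hp.1 hp.2)
    (by linarith)

theorem kappa_le_integral_regInv [IsFiniteMeasure Λ] (hx : 1 ≤ x) :
    kappa Λ x ≤ ∫ p in Icc 0 1, regInv x p ∂Λ := by
  rw [kappa, div_le_iff₀ (by linarith), mu, mul_comm, ← integral_const_mul]
  exact integral_mono_of_nonneg
    (ae_restrict_of_forall_mem measurableSet_Icc fun p hp => muInt_nonneg hx hp.1 hp.2)
    ((integrableOn_regInv (by linarith)).const_mul x)
    (ae_restrict_of_forall_mem measurableSet_Icc fun p hp => muInt_le_mul_regInv hx hp.1 hp.2)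

theorem integral_sq_regInv_le_nine_mul_lam [IsFiniteMeasure Λ] (hx : 3 ≤ x) :
    ∫ p in Icc 0 1, regInv x p ^ 2 ∂Λ ≤ 9 * lam Λ x := by
  rw [lam, ← integral_const_mul]
  refine setIntegral_mono_on (integrableOn_sq_regInv (by linarith))
    ((integrableOn_lamInt hx).const_mul 9) measurableSet_Icc fun p hp => ?_
  have h1 := regInv_le_three_mul_regInv hx hp.1
  have h2 := sq_regInv_le_lamInt hx hp.1 hp.2
  nlinarith [regInv_nonneg (by linarith : 0 ≤ x) hp.1]

theorem kappa_div_lam_le [IsFiniteMeasure Λ] (hx : 3 ≤ x)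
    (hS : 0 < ∫ p in Icc 0 1, regInv x p ^ 2 ∂Λ) :
    kappa Λ x / lam Λ x
      ≤ 9 * ((∫ p in Icc 0 1, regInv x p ∂Λ) / ∫ p in Icc 0 1, regInv x p ^ 2 ∂Λ) :=
  calc kappa Λ x / lam Λ x
      ≤ (∫ p in Icc 0 1, regInv x p ∂Λ) / ((∫ p in Icc 0 1, regInv x p ^ 2 ∂Λ) / 9) :=
        div_le_div₀ (setIntegral_nonneg measurableSet_Icc fun p hp =>
            regInv_nonneg (by linarith) hp.1)
          (kappa_le_integral_regInv (by linarith)) (by positivity)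
          (by linarith [integral_sq_regInv_le_nine_mul_lam (Λ := Λ) hx])
    _ = _ := by field_simp

theorem tendsto_integral_regInv_atTop [IsFiniteMeasure Λ]
    (hdust : ∫⁻ p in Icc (0:ℝ) 1, (ENNReal.ofReal p)⁻¹ ∂Λ = ⊤) :
    Tendsto (fun x => ∫ p in Icc 0 1, regInv x p ∂Λ) atTop atTop := by
  have hlin : Tendsto (fun n : ℕ => ∫⁻ p in Icc 0 1, ENNReal.ofReal (regInv (n + 1) p) ∂Λ)
      atTop (𝓝 ⊤) := by
    rw [← hdust]
    refine lintegral_tendsto_of_tendsto_of_monotone (fun n => by unfold regInv; fun_prop)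
      (ae_restrict_of_forall_mem measurableSet_Icc fun p hp m n hmn => ?_)
      (ae_restrict_of_forall_mem measurableSet_Icc fun p hp => ?_)
    · exact ENNReal.ofReal_le_ofReal
        (regInv_le_regInv (by positivity) (by gcongr) hp.1)
    · have h : ∀ n : ℕ, ENNReal.ofReal (regInv (n + 1) p)
          = (ENNReal.ofReal ((n : ℝ) + 1)⁻¹ + ENNReal.ofReal p)⁻¹ :=
        fun n => ofReal_regInv (by positivity) hp.1
      simp_rw [h]
      refine tendsto_inv_iff.2 ?_
      simpa using (ENNReal.tendsto_ofReal tendsto_one_div_add_atTop_nhds_zero_nat).add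
        (tendsto_const_nhds (x := ENNReal.ofReal p))
  have hnat : Tendsto (fun n : ℕ => ∫ p in Icc 0 1, regInv (n + 1) p ∂Λ) atTop atTop := by
    have h : ∀ n : ℕ, ENNReal.ofReal (∫ p in Icc 0 1, regInv (n + 1) p ∂Λ)
        = ∫⁻ p in Icc 0 1, ENNReal.ofReal (regInv (n + 1) p) ∂Λ := fun n =>
      ofReal_integral_eq_lintegral_ofReal (integrableOn_regInv (by positivity))
        (ae_restrict_of_forall_mem measurableSet_Icc fun p hp => regInv_nonneg (by positivity) hp.1)
    exact ENNReal.tendsto_ofReal_nhds_top.1 (by simpa only [h] using hlin)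
  rw [tendsto_atTop]
  intro M
  obtain ⟨n, hn⟩ := (hnat.eventually_ge_atTop M).exists
  filter_upwards [eventually_ge_atTop ((n : ℝ) + 1)] with x hx
  exact hn.trans (setIntegral_mono_on (integrableOn_regInv (by positivity))
    (integrableOn_regInv (by linarith)) measurableSet_Icc fun p hp =>
      regInv_le_regInv (by positivity) hx hp.1)

theorem tendsto_integral_sq_regInv_atTop [IsFiniteMeasure Λ]
    (hdust : ∫⁻ p in Icc (0:ℝ) 1, (ENNReal.ofReal p)⁻¹ ∂Λ = ⊤) :
    Tendsto (fun x => ∫ p in Icc 0 1, regInv x p ^ 2 ∂Λ) atTop atTop := by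
  refine tendsto_atTop_mono' _ ?_ ((tendsto_integral_regInv_atTop hdust).atTop_div_const two_pos)
  filter_upwards [eventually_ge_atTop 1] with x hx
  rw [div_le_iff₀ two_pos, ← integral_mul_const]
  refine setIntegral_mono_on (integrableOn_regInv (by linarith))
    ((integrableOn_sq_regInv (by linarith)).mul_const 2) measurableSet_Icc fun p hp => ?_
  nlinarith [half_le_regInv hx hp.1 hp.2]

end Rates

theorem kappa_isLittleO_lam_general (Λ : Measure ℝ) [IsFiniteMeasure Λ]
    (hdust : ∫⁻ p in Set.Icc (0:ℝ) 1, (ENNReal.ofReal p)⁻¹ ∂Λ = ⊤) :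
    Tendsto (fun x => kappa Λ x / lam Λ x) atTop (𝓝 0) := by
  have hsq := tendsto_integral_sq_regInv_atTop hdust
  have hratio := tendsto_integral_div_integral_sq_nhds_zero (ν := Λ.restrict (Icc 0 1))
    (g := regInv)
    (eventually_ge_atTop 0 |>.mono fun x hx =>
      ae_restrict_of_forall_mem measurableSet_Icc fun p hp => regInv_nonneg hx hp.1)
    (eventually_ge_atTop 0 |>.mono fun x hx => integrableOn_sq_regInv hx) hsq
  refine squeeze_zero' ?_ ?_ (by simpa using hratio.const_mul 9)
  · filter_upwards [eventually_ge_atTop 3] with x hx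
    exact div_nonneg (kappa_nonneg (by linarith)) (lam_nonneg hx)
  · filter_upwards [eventually_ge_atTop 3, hsq.eventually_gt_atTop 0] with x hx hS
    exact kappa_div_lam_le hx hS

/-- If the `Λ`-coalescent has no dust component, then `κ(x) = o(λ(x))` as `x → ∞`. -/
theorem kappa_isLittleO_lam (Λ : Measure ℝ) [IsFiniteMeasure Λ] (hΛ : Λ ≠ 0)
    (hsupp : Λ (Set.Icc (0:ℝ) 1)ᶜ = 0)
    (hdust : ∫⁻ p in Set.Icc (0:ℝ) 1, (ENNReal.ofReal p)⁻¹ ∂Λ = ⊤) :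
    Tendsto (fun x => kappa Λ x / lam Λ x) atTop (𝓝 0) :=
  kappa_isLittleO_lam_general Λ hdust
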